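/- Define f₂ : [2,∞) → ℝ by s·f₂(s) = s − 3 log(s−1) + 3 log 3 − 4 for 2 ≤ s ≤ 4 and f₂(s) = 0 for s ≥ 4. Then f₂ satisfies the recursion s·f₂(s) = ∫_s^∞ f₁(t−1) dt for s ≥ 2, where f₁(s) = (3 − s)/s for 1 ≤ s ≤ 3 and f₁(s) = 0 for s > 3, and moreover f₂(s) ≤ 2e² · 0.33 · h(s) for all s ≥ 2. -/

import Mathlib

open Real

/-- The function `h(s)`: `e⁻²` for `1 ≤ s ≤ 2`, `e⁻ˢ` for `2 ≤ s ≤ 3`,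
and `3 s⁻¹ e⁻ˢ` for `s ≥ 3`. -/
noncomputable def hfun (s : ℝ) : ℝ :=
  if s ≤ 2 then Real.exp (-2) else if s ≤ 3 then Real.exp (-s) else 3 / s * Real.exp (-s)

/-- `f₁(s) = (3 - s)/s` for `1 ≤ s ≤ 3`, and `f₁(s) = 0` for `s > 3`. -/
noncomputable def fone (s : ℝ) : ℝ := if 1 ≤ s ∧ s ≤ 3 then (3 - s) / s else 0

/-- `f₂`, defined on `[2, ∞)` by `s f₂(s) = s - 3 log (s-1) + 3 log 3 - 4` for
`2 ≤ s ≤ 4` and `f₂(s) = 0` for `s ≥ 4`. -/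
noncomputable def ftwo (s : ℝ) : ℝ :=
  if s < 4 then (s - 3 * Real.log (s - 1) + 3 * Real.log 3 - 4) / s else 0

/-!
Write `g(s) = s - 3 log (s - 1) + 3 log 3 - 4`, so that `s f₂(s) = g(s)` on `[2, 4)`. Since
`f₁(t - 1) = (4 - t)/(t - 1)` on `[2, 4]` and vanishes elsewhere, while `g' = (s - 4)/(s - 1)` and
`g(4) = 0`, the recursion is the fundamental theorem of calculus.

For the bound, multiply by `s`. On `[3, 4]` the function `g` decreases, so
`g(s) ≤ g(3) = 3 log (3/2) - 1 < 1.98 e⁻² ≤ 1.98 e^{2-s}`. On `[2, 3]` the gap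
`0.66 s e^{2-s} - g(s)` equals `3.32 - 3 log 3 > 0` at `s = 2` and is increasing; the sign of its
derivative reduces to `0.66 (s - 1)² e^{2-s} ≤ 4 - s`, which follows from
`e^u ≥ 1 + u + u²/2 + u³/6` (the quadratic Taylor bound is too weak near `s = 3`).
-/

open MeasureTheory Set

noncomputable def ftwoNumerator (s : ℝ) : ℝ := s - 3 * log (s - 1) + 3 * log 3 - 4

lemma ftwo_of_lt_four {s : ℝ} (hs : s < 4) : ftwo s = ftwoNumerator s / s := if_pos hs

lemma ftwo_of_four_le {s : ℝ} (hs : 4 ≤ s) : ftwo s = 0 := if_neg hs.not_gt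

lemma ftwoNumerator_four : ftwoNumerator 4 = 0 := by
  norm_num [ftwoNumerator]

lemma hasDerivAt_ftwoNumerator {x : ℝ} (hx : 1 < x) :
    HasDerivAt ftwoNumerator ((x - 4) / (x - 1)) x := by
  have hx1 : x - 1 ≠ 0 := sub_ne_zero.2 hx.ne'
  have hlog : HasDerivAt (fun y => log (y - 1)) (1 / (x - 1)) x := by
    simpa using ((hasDerivAt_id x).sub_const 1).log hx1
  have h : HasDerivAt ftwoNumerator (1 - 3 * (1 / (x - 1))) x :=
    (((hasDerivAt_id' x).sub (hlog.const_mul 3)).add_const (3 * log 3)).sub_const 4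
  convert h using 1
  field_simp
  ring

lemma fone_sub_one (t : ℝ) :
    fone (t - 1) = (Icc 2 4).indicator (fun t => (4 - t) / (t - 1)) t := by
  by_cases ht : t ∈ Icc (2 : ℝ) 4
  · rw [indicator_of_mem ht, fone, if_pos ⟨by linarith [ht.1], by linarith [ht.2]⟩]
    congr 1
    ring
  · rw [indicator_of_notMem ht, fone, if_neg]
    rintro ⟨h1, h3⟩
    exact ht ⟨by linarith, by linarith⟩

lemma setIntegral_Ioi_fone_sub_one {s : ℝ} (hs : 2 ≤ s) :
    ∫ t in Ioi s, fone (t - 1) = ∫ t in Ioc s 4, (4 - t) / (t - 1) := by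
  have hinter : Ioi s ∩ Icc 2 4 = Ioc s 4 := by
    ext t
    simp only [mem_inter_iff, mem_Ioi, mem_Icc, mem_Ioc]
    constructor
    · rintro ⟨hst, -, ht4⟩
      exact ⟨hst, ht4⟩
    · rintro ⟨hst, ht4⟩
      exact ⟨hst, by linarith, ht4⟩
  simp_rw [fone_sub_one]
  rw [setIntegral_indicator measurableSet_Icc, hinter]

lemma setIntegral_Ioc_eq_ftwoNumerator {s : ℝ} (hs1 : 1 < s) (hs4 : s ≤ 4) :
    ∫ t in Ioc s 4, (4 - t) / (t - 1) = ftwoNumerator s := by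
  have hderiv : ∀ t ∈ uIcc s 4, HasDerivAt (fun t => -ftwoNumerator t) ((4 - t) / (t - 1)) t := by
    intro t ht
    rw [uIcc_of_le hs4] at ht
    have h := (hasDerivAt_ftwoNumerator (hs1.trans_le ht.1)).neg
    rwa [← neg_div, neg_sub] at h
  have hcont : ContinuousOn (fun t : ℝ => (4 - t) / (t - 1)) (uIcc s 4) := by
    refine ContinuousOn.div (by fun_prop) (by fun_prop) fun t ht => ?_
    rw [uIcc_of_le hs4] at ht
    linarith [ht.1]
  rw [← intervalIntegral.integral_of_le hs4,
    intervalIntegral.integral_eq_sub_of_hasDerivAt hderiv hcont.intervalIntegrable,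
    ftwoNumerator_four]
  ring

lemma mul_ftwo_eq_setIntegral {s : ℝ} (hs : 2 ≤ s) :
    s * ftwo s = ∫ t in Ioi s, fone (t - 1) := by
  rw [setIntegral_Ioi_fone_sub_one hs]
  rcases lt_or_ge s 4 with hs4 | hs4
  · rw [setIntegral_Ioc_eq_ftwoNumerator (by linarith) hs4.le, ftwo_of_lt_four hs4,
      mul_div_cancel₀ _ (by positivity)]
  · rw [ftwo_of_four_le hs4, Ioc_eq_empty hs4.not_gt, Measure.restrict_empty, integral_zero_measure,
      mul_zero]

lemma hfun_of_mem_Icc {s : ℝ} (hs2 : 2 ≤ s) (hs3 : s ≤ 3) : hfun s = exp (-s) := by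
  rcases hs2.eq_or_lt with rfl | hs2
  · simp [hfun]
  · simp [hfun, hs2.not_ge, hs3]

lemma hfun_of_three_lt {s : ℝ} (hs : 3 < s) : hfun s = 3 / s * exp (-s) := by
  simp [hfun, hs.not_ge, (by linarith : ¬ s ≤ 2)]

lemma exp_neg_mul_cubic_le_one {u : ℝ} (hu : 0 ≤ u) :
    exp (-u) * (1 + u + u ^ 2 / 2 + u ^ 3 / 6) ≤ 1 := by
  have h := Real.sum_le_exp_of_nonneg hu 4
  simp only [Finset.sum_range_succ, Finset.sum_range_zero, Nat.factorial] at h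
  norm_num at h
  rw [exp_neg, inv_mul_le_one₀ (exp_pos u)]
  linarith

lemma sq_mul_exp_two_sub_le {x : ℝ} (hx2 : 2 ≤ x) (hx3 : x ≤ 3) :
    0.66 * (x - 1) ^ 2 * exp (2 - x) ≤ 4 - x := by
  set u := x - 2
  have hE := exp_neg_mul_cubic_le_one (u := u) (by linarith)
  have hE0 := (exp_pos (-u)).le
  rw [show 2 - x = -u by ring, show x - 1 = 1 + u by ring, show 4 - x = 2 - u by ring]
  have hu1 : u ≤ 1 := by linarith
  have hu0 : 0 ≤ u := by linarith
  nlinarith [mul_nonneg hu0 (sub_nonneg.2 hu1), mul_nonneg (mul_nonneg hu0 hu0) (sub_nonneg.2 hu1)]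

lemma hasDerivAt_mul_exp_two_sub (x : ℝ) :
    HasDerivAt (fun x => x * exp (2 - x)) ((1 - x) * exp (2 - x)) x :=
  ((hasDerivAt_id' x).mul ((hasDerivAt_id' x).const_sub 2).exp).congr_deriv (by ring)

lemma ftwoNumerator_le_of_mem_Icc {s : ℝ} (hs2 : 2 ≤ s) (hs3 : s ≤ 3) :
    ftwoNumerator s ≤ 0.66 * s * exp (2 - s) := by
  set D : ℝ → ℝ := fun x => 0.66 * (x * exp (2 - x)) - ftwoNumerator x with hD
  have hderiv : ∀ x ∈ Icc (2 : ℝ) 3,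
      HasDerivAt D (0.66 * ((1 - x) * exp (2 - x)) - (x - 4) / (x - 1)) x := fun x hx =>
    ((hasDerivAt_mul_exp_two_sub x).const_mul 0.66).sub
      (hasDerivAt_ftwoNumerator (by linarith [hx.1]))
  have hmono : MonotoneOn D (Icc 2 3) := by
    refine monotoneOn_of_hasDerivWithinAt_nonneg (convex_Icc 2 3)
      (HasDerivAt.continuousOn hderiv)
      (fun x hx => (hderiv x (interior_subset hx)).hasDerivWithinAt) fun x hx => ?_
    rw [interior_Icc] at hx
    have hx1 : 0 < x - 1 := by linarith [hx.1]
    have hkey := sq_mul_exp_two_sub_le hx.1.le hx.2.le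
    rw [show 0.66 * ((1 - x) * exp (2 - x)) - (x - 4) / (x - 1)
        = (4 - x - 0.66 * (x - 1) ^ 2 * exp (2 - x)) / (x - 1) by field_simp; ring]
    exact div_nonneg (sub_nonneg.2 hkey) hx1.le
  have hD2 : 0 ≤ D 2 := by
    norm_num [hD, ftwoNumerator]
    linarith [log_three_lt_d9]
  have := hD2.trans (hmono ⟨le_rfl, by norm_num⟩ ⟨hs2, hs3⟩ hs2)
  simp only [hD] at this
  linarith

lemma antitoneOn_ftwoNumerator : AntitoneOn ftwoNumerator (Icc 2 4) := by
  have hderiv : ∀ x ∈ Icc (2 : ℝ) 4, HasDerivAt ftwoNumerator ((x - 4) / (x - 1)) x :=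
    fun x hx => hasDerivAt_ftwoNumerator (by linarith [hx.1])
  refine antitoneOn_of_hasDerivWithinAt_nonpos (convex_Icc 2 4) (HasDerivAt.continuousOn hderiv)
    (fun x hx => (hderiv x (interior_subset hx)).hasDerivWithinAt) fun x hx => ?_
  rw [interior_Icc] at hx
  exact div_nonpos_of_nonpos_of_nonneg (by linarith [hx.2]) (by linarith [hx.1])

lemma ftwoNumerator_le_of_three_le {s : ℝ} (hs3 : 3 ≤ s) (hs4 : s ≤ 4) :
    ftwoNumerator s ≤ 1.98 * exp (2 - s) := by
  calc ftwoNumerator s ≤ ftwoNumerator 3 :=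
        antitoneOn_ftwoNumerator ⟨by norm_num, by norm_num⟩ ⟨by linarith, hs4⟩ hs3
    _ ≤ 1.98 * exp (-2) := by
        have h3 := log_three_lt_d9
        have h2 := log_two_gt_d9
        have he : 0.36787944116 ^ 2 < exp (-2) := by
          rw [show (-2 : ℝ) = -1 + -1 by norm_num, exp_add]
          nlinarith [exp_neg_one_gt_d9]
        norm_num [ftwoNumerator]
        linarith
    _ ≤ 1.98 * exp (2 - s) := by gcongr; linarith

lemma ftwo_le_two_mul_exp_two_mul_hfun {s : ℝ} (hs : 2 ≤ s) :
    ftwo s ≤ 2 * exp 2 * 0.33 * hfun s := by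
  have hexp : exp (2 - s) = exp 2 * exp (-s) := by rw [sub_eq_add_neg, exp_add]
  rcases lt_or_ge s 4 with hs4 | hs4
  · rw [ftwo_of_lt_four hs4, div_le_iff₀ (by positivity)]
    rcases le_or_gt s 3 with hs3 | hs3
    · calc ftwoNumerator s ≤ 0.66 * s * exp (2 - s) := ftwoNumerator_le_of_mem_Icc hs hs3
        _ = 2 * exp 2 * 0.33 * hfun s * s := by rw [hfun_of_mem_Icc hs hs3, hexp]; ring
    · calc ftwoNumerator s ≤ 1.98 * exp (2 - s) := ftwoNumerator_le_of_three_le hs3.le hs4.le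
        _ = 2 * exp 2 * 0.33 * hfun s * s := by
          rw [hfun_of_three_lt hs3, hexp]
          field_simp
          ring
  · rw [ftwo_of_four_le hs4, hfun_of_three_lt (by linarith)]
    positivity

/-- `f₂` satisfies the recursion `s f₂(s) = ∫_s^∞ f₁(t-1) dt` for `s ≥ 2` and the
bound `f₂(s) ≤ 2 e² · 0.33 · h(s)` for all `s ≥ 2`. -/
theorem ftwo_recursion_and_bound :
    (∀ s : ℝ, 2 ≤ s → s * ftwo s = ∫ t in Set.Ioi s, fone (t - 1)) ∧
    (∀ s : ℝ, 2 ≤ s → ftwo s ≤ 2 * Real.exp 2 * 0.33 * hfun s) :=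
  ⟨fun _ => mul_ftwo_eq_setIntegral, fun _ => ftwo_le_two_mul_exp_two_mul_hfun⟩
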